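/- Coprimality criterion for primality: a finite relation S (with at least two distinct values for some attribute A, and v a value of A in S such that both σ_{A=v}(S) and σ_{A≠v}(S) are nonempty) is prime if and only if σ_{A=v}(S) and σ_{A≠v}(S) are coprime, i.e., they have no common proper-schema factor. -/

import Mathlib

/-! If `S = Q × R'` with `Q` over `V ≠ U`, then either `V` or `U \ V` avoids `A`; the factor
over the side avoiding `A` survives both selections on `A`, so it is a common factor of
`σ_{A=v}(S)` and `σ_{A≠v}(S)`. Conversely a common factor `P` of the two selections is a
factor of their union `S`. -/

open Classical

noncomputable def restrictT {α D : Type*} (V : Set α) (t : α → Option D) : α → Option D :=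
  fun a => if a ∈ V then t a else none

def combineT {α D : Type*} (q r : α → Option D) : α → Option D :=
  fun a => (q a).orElse (fun _ => r a)

def prodRel {α D : Type*} (Q R : Set (α → Option D)) : Set (α → Option D) :=
  Set.image2 combineT Q R

def IsOver {α D : Type*} (U : Set α) (t : α → Option D) : Prop :=
  ∀ a, (t a).isSome ↔ a ∈ U

def IsRelOver {α D : Type*} (U : Set α) (R : Set (α → Option D)) : Prop :=
  R.Finite ∧ ∀ t ∈ R, IsOver U t

noncomputable def projRel {α D : Type*} (V : Set α) (R : Set (α → Option D)) :
    Set (α → Option D) :=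
  (restrictT V) '' R

def IsFactor {α D : Type*} (U : Set α) (R : Set (α → Option D))
    (V : Set α) (Q : Set (α → Option D)) : Prop :=
  V.Nonempty ∧ V ⊆ U ∧ IsRelOver V Q ∧
    ∃ R', IsRelOver (U \ V) R' ∧ R = prodRel Q R'

noncomputable def prodList {α D : Type*} (L : List (Set (α → Option D))) :
    Set (α → Option D) :=
  L.foldr prodRel {fun _ => none}

def IsPrimeRel {α D : Type*} (U : Set α) (Q : Set (α → Option D)) : Prop :=
  IsRelOver U Q ∧ ∀ V P, IsFactor U Q V P → P = Q

def selEq {α D : Type*} (A : α) (v : D) (S : Set (α → Option D)) : Set (α → Option D) :=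
  {t ∈ S | t A = some v}

def selNe {α D : Type*} (A : α) (v : D) (S : Set (α → Option D)) : Set (α → Option D) :=
  {t ∈ S | t A ≠ some v}

def CoprimeRel {α D : Type*} (U : Set α) (Q R : Set (α → Option D)) : Prop :=
  ¬ ∃ (V : Set α) (P : Set (α → Option D)), V ≠ U ∧ IsFactor U Q V P ∧ IsFactor U R V P

section Factors

variable {α D : Type*}

lemma IsOver.eq_none {U : Set α} {t : α → Option D} (ht : IsOver U t) {a : α} (ha : a ∉ U) :
    t a = none :=
  Option.not_isSome_iff_eq_none.mp fun h => ha ((ht a).mp h)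

lemma IsRelOver.sep {U : Set α} {R : Set (α → Option D)} (hR : IsRelOver U R)
    (p : (α → Option D) → Prop) : IsRelOver U {t ∈ R | p t} :=
  ⟨hR.1.subset (Set.sep_subset _ _), fun t ht => hR.2 t ht.1⟩

lemma combineT_apply_of_left_eq_none {q : α → Option D} {a : α} (h : q a = none)
    (r : α → Option D) :
    combineT q r a = r a := by
  simp [combineT, h]

lemma combineT_apply_of_right_eq_none {r : α → Option D} {a : α} (h : r a = none)
    (q : α → Option D) : combineT q r a = q a := by
  simp only [combineT, h]
  cases q a <;> rfl

lemma combineT_comm {V W : Set α} {q r : α → Option D}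
    (hq : IsOver V q) (hr : IsOver W r) (hVW : Disjoint V W) :
    combineT q r = combineT r q := by
  funext a
  by_cases haV : a ∈ V
  · have hra : r a = none := hr.eq_none (Set.disjoint_left.mp hVW haV)
    rw [combineT_apply_of_left_eq_none hra, combineT_apply_of_right_eq_none hra]
  · have hqa : q a = none := hq.eq_none haV
    rw [combineT_apply_of_left_eq_none hqa, combineT_apply_of_right_eq_none hqa]

lemma prodRel_comm {V W : Set α} {Q R : Set (α → Option D)}
    (hQ : ∀ q ∈ Q, IsOver V q) (hR : ∀ r ∈ R, IsOver W r) (hVW : Disjoint V W) :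
    prodRel Q R = prodRel R Q := by
  rw [prodRel, prodRel, Set.image2_swap]
  exact Set.image2_congr fun r hr q hq => combineT_comm (hQ q hq) (hR r hr) hVW

lemma sep_prodRel_of_notMem {V : Set α} {A : α} (hA : A ∉ V) {Q : Set (α → Option D)}
    (hQ : ∀ q ∈ Q, IsOver V q) (R : Set (α → Option D)) (p : Option D → Prop) :
    {t ∈ prodRel Q R | p (t A)} = prodRel Q {r ∈ R | p (r A)} := by
  ext t
  simp only [prodRel, Set.mem_image2, Set.mem_ofPred_eq]
  constructor
  · rintro ⟨⟨q, hq, r, hr, rfl⟩, ht⟩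
    rw [combineT_apply_of_left_eq_none ((hQ q hq).eq_none hA)] at ht
    exact ⟨q, hq, r, ⟨hr, ht⟩, rfl⟩
  · rintro ⟨q, hq, r, ⟨hr, ht⟩, rfl⟩
    refine ⟨⟨q, hq, r, hr, rfl⟩, ?_⟩
    rwa [combineT_apply_of_left_eq_none ((hQ q hq).eq_none hA)]

lemma IsFactor.union {U V : Set α} {S₁ S₂ P : Set (α → Option D)}
    (h₁ : IsFactor U S₁ V P) (h₂ : IsFactor U S₂ V P) : IsFactor U (S₁ ∪ S₂) V P := by
  obtain ⟨hV, hVU, hP, R₁, hR₁, rfl⟩ := h₁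
  obtain ⟨-, -, -, R₂, hR₂, rfl⟩ := h₂
  refine ⟨hV, hVU, hP, R₁ ∪ R₂, ⟨hR₁.1.union hR₂.1, ?_⟩, ?_⟩
  · rintro t (ht | ht)
    exacts [hR₁.2 t ht, hR₂.2 t ht]
  · simp only [prodRel, Set.image2_union_right]

lemma IsFactor.sep {U V : Set α} {S Q : Set (α → Option D)} (h : IsFactor U S V Q)
    {A : α} (hA : A ∉ V) (p : Option D → Prop) : IsFactor U {t ∈ S | p (t A)} V Q := by
  obtain ⟨hV, hVU, hQ, R, hR, rfl⟩ := h
  exact ⟨hV, hVU, hQ, {r ∈ R | p (r A)}, hR.sep _, sep_prodRel_of_notMem hA hQ.2 R p⟩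

lemma IsFactor.compl {U V : Set α} {S Q : Set (α → Option D)} (h : IsFactor U S V Q)
    (hVU : V ≠ U) : ∃ R, IsFactor U S (U \ V) R := by
  obtain ⟨-, hVU', hQ, R, hR, rfl⟩ := h
  refine ⟨R, Set.sdiff_nonempty.mpr fun hUV => hVU (hVU'.antisymm hUV), Set.sdiff_subset, hR,
    Q, ?_, prodRel_comm hQ.2 hR.2 Set.disjoint_sdiff_right⟩
  rwa [Set.sdiff_sdiff_cancel_left hVU']

lemma IsFactor.diff_ne {U V : Set α} {S Q : Set (α → Option D)} (h : IsFactor U S V Q) :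
    U \ V ≠ U := by
  obtain ⟨⟨x, hx⟩, hVU, -⟩ := h
  intro hUV
  have hxUV : x ∈ U \ V := by rw [hUV]; exact hVU hx
  exact hxUV.2 hx

lemma IsFactor.exists_notMem {U V : Set α} {S Q : Set (α → Option D)} (h : IsFactor U S V Q)
    (hVU : V ≠ U) (A : α) :
    ∃ W P, W ≠ U ∧ IsFactor U S W P ∧ A ∉ W := by
  by_cases hAV : A ∈ V
  · obtain ⟨R, hR⟩ := h.compl hVU
    exact ⟨U \ V, R, h.diff_ne, hR, fun hA' => hA'.2 hAV⟩
  · exact ⟨V, Q, hVU, h, hAV⟩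

lemma selEq_union_selNe (A : α) (v : D) (S : Set (α → Option D)) :
    selEq A v S ∪ selNe A v S = S := by
  ext t
  simp only [selEq, selNe, Set.mem_union, Set.mem_ofPred_eq, ← and_or_left,
    Classical.em, and_true]

end Factors

theorem stmt_5_general {α D : Type*} (U : Set α)
    (S : Set (α → Option D))
    (A : α) (v : D) :
    (∀ V Q, IsFactor U S V Q → V = U) ↔
      CoprimeRel U (selEq A v S) (selNe A v S) := by
  constructor
  · rintro hprime ⟨V, P, hVU, hEq, hNe⟩
    have hS : IsFactor U S V P := selEq_union_selNe A v S ▸ hEq.union hNe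
    exact hVU (hprime V P hS)
  · intro hcop V Q hfac
    by_contra hVU
    obtain ⟨W, P, hWU, hW, hAW⟩ := hfac.exists_notMem hVU A
    exact hcop ⟨W, P, hWU, hW.sep hAW (· = some v), hW.sep hAW (· ≠ some v)⟩

theorem stmt_5 {α D : Type*} (U : Set α) (hUfin : U.Finite) (hU2 : 2 ≤ U.ncard)
    (S : Set (α → Option D)) (hS : IsRelOver U S)
    (A : α) (hA : A ∈ U) (v : D)
    (h1 : (selEq A v S).Nonempty) (h2 : (selNe A v S).Nonempty) :
    (∀ V Q, IsFactor U S V Q → V = U) ↔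
      CoprimeRel U (selEq A v S) (selNe A v S) :=
  stmt_5_general U S A v
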